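/- Entry formula for the order-N Hyena matrix: fix a sequence length L, order N ≥ 1, filters h^1, …, h^N : Fin L → ℝ and projections x^1, …, x^N : Fin L → ℝ. The matrix H = D^N S^N ⋯ D^1 S^1, where D^n = diag(x^n) and S^n is the lower-triangular Toeplitz matrix of h^n, has entries given for s ≤ t by H_{t,s} = x^N_t · Σ over chains s ≤ r_1 ≤ r_2 ≤ ⋯ ≤ r_{N−1} ≤ t of h^N_{t−r_{N−1}} · x^{N−1}_{r_{N−1}} · h^{N−1}_{r_{N−1}−r_{N−2}} ⋯ x^1_{r_1} · h^1_{r_1−s}, and H_{t,s} = 0 for s > t. -/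
import Mathlib


open Finset Matrix

/-- Lower-triangular Toeplitz matrix of a filter:
`(S_h)_{t,s} = h_{t-s}` if `s ≤ t`, and `0` otherwise. -/
def toeplitz {L : ℕ} (h : Fin L → ℝ) : Matrix (Fin L) (Fin L) ℝ :=
  Matrix.of fun t s : Fin L =>
    if s ≤ t then h ⟨t.1 - s.1, Nat.lt_of_le_of_lt (Nat.sub_le _ _) t.2⟩ else 0

/-- Data-controlled Hyena matrix: `H = D^N S^N ⋯ D^2 S^2 D^1 S^1` where
`D^n = diag(x^n)` and `S^n` is the Toeplitz matrix of `h^n`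
(filters and projections are 0-indexed). -/
def hyenaMatrix {L : ℕ} : (N : ℕ) → (Fin N → Fin L → ℝ) → (Fin N → Fin L → ℝ) →
    Matrix (Fin L) (Fin L) ℝ
  | 0, _, _ => 1
  | N + 1, h, x =>
      Matrix.diagonal (x (Fin.last N)) * toeplitz (h (Fin.last N)) *
        hyenaMatrix N (fun n => h n.castSucc) (fun n => x n.castSucc)

lemma mono_snoc_iff {L N : ℕ} (r : Fin (N + 1) → Fin L) (u : Fin L) :
    (∀ a b : Fin (N + 2), a ≤ b → (Fin.snoc r u : Fin (N + 2) → Fin L) a ≤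
        (Fin.snoc r u : Fin (N + 2) → Fin L) b) ↔
      ((∀ a b : Fin (N + 1), a ≤ b → r a ≤ r b) ∧ r (Fin.last N) ≤ u) := by
  constructor
  · intro H
    refine ⟨fun a b hab => ?_, ?_⟩
    · have := H a.castSucc b.castSucc (by simpa using hab)
      simpa using this
    · have := H (Fin.last N).castSucc (Fin.last (N + 1)) (Fin.le_last _)
      simpa using this
  · rintro ⟨H1, H2⟩ a b hab
    rcases Fin.eq_castSucc_or_eq_last b with ⟨b', rfl⟩ | rfl
    · rcases Fin.eq_castSucc_or_eq_last a with ⟨a', rfl⟩ | rfl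
      · simpa using H1 a' b' (by simpa using hab)
      · exact absurd hab (not_le.mpr (Fin.castSucc_lt_last b'))
    · rcases Fin.eq_castSucc_or_eq_last a with ⟨a', rfl⟩ | rfl
      · simpa using (H1 a' (Fin.last N) (Fin.le_last _)).trans H2
      · simp

lemma hyena_aux {L : ℕ} : ∀ (N : ℕ) (h x : Fin N → Fin L → ℝ) (t s : Fin L),
    hyenaMatrix N h x t s =
      ∑ r : Fin (N + 1) → Fin L,
        if r 0 = s ∧ r (Fin.last N) = t ∧ (∀ a b : Fin (N + 1), a ≤ b → r a ≤ r b) then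
          ∏ n : Fin N,
            x n (r n.succ) *
              h n ⟨(r n.succ).1 - (r n.castSucc).1,
                    Nat.lt_of_le_of_lt (Nat.sub_le _ _) (r n.succ).2⟩
        else 0 := by
  intro N
  induction N with
  | zero =>
    intro h x t s
    show (1 : Matrix (Fin L) (Fin L) ℝ) t s = _
    rw [Matrix.one_apply]
    rw [Fintype.sum_eq_single (fun _ : Fin 1 => s) ?_]
    · by_cases hts : t = s
      · subst hts; simp
      · rw [if_neg hts, if_neg (fun hc => hts hc.2.1.symm)]
    · intro r hr
      rw [if_neg]
      rintro ⟨h0, -, -⟩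
      exact hr (funext fun i => by rw [Subsingleton.elim i 0, h0])
  | succ N ih =>
    intro h x t s
    have key : ∀ r : Fin (N + 1) → Fin L,
        (∑ u : Fin L,
          if (Fin.snoc r u : Fin (N + 2) → Fin L) 0 = s ∧
              (Fin.snoc r u : Fin (N + 2) → Fin L) (Fin.last (N + 1)) = t ∧
              (∀ a b : Fin (N + 2), a ≤ b → (Fin.snoc r u : Fin (N + 2) → Fin L) a ≤
                (Fin.snoc r u : Fin (N + 2) → Fin L) b) then
            ∏ n : Fin (N + 1),
              x n ((Fin.snoc r u : Fin (N + 2) → Fin L) n.succ) *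
                h n ⟨((Fin.snoc r u : Fin (N + 2) → Fin L) n.succ).1 -
                      ((Fin.snoc r u : Fin (N + 2) → Fin L) n.castSucc).1,
                    Nat.lt_of_le_of_lt (Nat.sub_le _ _)
                      ((Fin.snoc r u : Fin (N + 2) → Fin L) n.succ).2⟩
          else 0) =
        (if r 0 = s ∧ (∀ a b : Fin (N + 1), a ≤ b → r a ≤ r b) ∧ r (Fin.last N) ≤ t then
          (∏ n : Fin N,
            x n.castSucc (r n.succ) *
              h n.castSucc ⟨(r n.succ).1 - (r n.castSucc).1,
                    Nat.lt_of_le_of_lt (Nat.sub_le _ _) (r n.succ).2⟩) *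
          (x (Fin.last N) t *
            h (Fin.last N) ⟨t.1 - (r (Fin.last N)).1,
              Nat.lt_of_le_of_lt (Nat.sub_le _ _) t.2⟩)
        else 0) := by
      intro r
      have h0 : (Fin.snoc r t : Fin (N + 2) → Fin L) 0 = r 0 := by
        rw [← Fin.castSucc_zero, Fin.snoc_castSucc]
      rw [Fintype.sum_eq_single t ?_]
      · by_cases hc : r 0 = s ∧ (∀ a b : Fin (N + 1), a ≤ b → r a ≤ r b) ∧
            r (Fin.last N) ≤ t
        · rw [if_pos ⟨h0.trans hc.1, Fin.snoc_last _ _,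
              (mono_snoc_iff r t).mpr ⟨hc.2.1, hc.2.2⟩⟩, if_pos hc]
          rw [Fin.prod_univ_castSucc]
          congr 1
          · refine Finset.prod_congr rfl fun n _ => ?_
            rw [show (n.castSucc : Fin (N+1)).succ = (n.succ).castSucc from
                  Fin.succ_castSucc n,
                Fin.snoc_castSucc, Fin.snoc_castSucc]
          · rw [Fin.succ_last, Fin.snoc_last, Fin.snoc_castSucc]
        · rw [if_neg (fun hc2 => hc ⟨h0.symm.trans hc2.1,
              ((mono_snoc_iff r t).mp hc2.2.2).1,
              ((mono_snoc_iff r t).mp hc2.2.2).2⟩), if_neg hc]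
      · intro u hu
        rw [if_neg]
        rintro ⟨-, h2, -⟩
        rw [Fin.snoc_last] at h2
        exact hu h2
    show (Matrix.diagonal (x (Fin.last N)) * toeplitz (h (Fin.last N)) *
        hyenaMatrix N (fun n => h n.castSucc) (fun n => x n.castSucc)) t s = _
    rw [← Equiv.sum_comp (Fin.snocEquiv (fun _ => Fin L)),
        Fintype.sum_prod_type_right]
    simp only [Fin.snocEquiv_apply]
    rw [Finset.sum_congr rfl (fun r _ => key r)]
    rw [Matrix.mul_apply]
    have lhs2 : ∀ j : Fin L,
        (Matrix.diagonal (x (Fin.last N)) * toeplitz (h (Fin.last N))) t j *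
          hyenaMatrix N (fun n => h n.castSucc) (fun n => x n.castSucc) j s =
        x (Fin.last N) t *
          (if j ≤ t then h (Fin.last N)
              ⟨t.1 - j.1, Nat.lt_of_le_of_lt (Nat.sub_le _ _) t.2⟩ else 0) *
          ∑ r : Fin (N + 1) → Fin L,
            if r 0 = s ∧ r (Fin.last N) = j ∧
                (∀ a b : Fin (N + 1), a ≤ b → r a ≤ r b) then
              ∏ n : Fin N,
                x n.castSucc (r n.succ) *
                  h n.castSucc ⟨(r n.succ).1 - (r n.castSucc).1,
                        Nat.lt_of_le_of_lt (Nat.sub_le _ _) (r n.succ).2⟩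
            else 0 := by
      intro j
      rw [Matrix.diagonal_mul, ih]
      rfl
    rw [Finset.sum_congr rfl (fun j _ => lhs2 j)]
    simp only [Finset.mul_sum]
    rw [Finset.sum_comm]
    refine Finset.sum_congr rfl fun r _ => ?_
    rw [Fintype.sum_eq_single (r (Fin.last N)) ?_]
    · by_cases hle : r (Fin.last N) ≤ t
      · by_cases hc : r 0 = s ∧ (∀ a b : Fin (N + 1), a ≤ b → r a ≤ r b)
        · rw [if_pos hle, if_pos ⟨hc.1, rfl, hc.2⟩, if_pos ⟨hc.1, hc.2, hle⟩]
          ring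
        · rw [if_pos hle, if_neg (fun hc2 => hc ⟨hc2.1, hc2.2.2⟩),
              if_neg (fun hc2 => hc ⟨hc2.1, hc2.2.1⟩)]
          ring
      · rw [if_neg hle,
            if_neg (show ¬(r 0 = s ∧ (∀ a b : Fin (N + 1), a ≤ b → r a ≤ r b) ∧
                r (Fin.last N) ≤ t) from fun hc2 => hle hc2.2.2)]
        simp
    · intro j hj
      by_cases hcj : r 0 = s ∧ r (Fin.last N) = j ∧
          (∀ a b : Fin (N + 1), a ≤ b → r a ≤ r b)
      · exact absurd hcj.2.1.symm hj
      · rw [if_neg hcj]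
        simp

/-- Entry formula for the order-`N` Hyena matrix `H = D^N S^N ⋯ D^1 S^1`: for `s ≤ t`,
`H_{t,s} = Σ` over monotone chains `s = r_0 ≤ r_1 ≤ ⋯ ≤ r_{N−1} ≤ r_N = t` of
`∏_{n=1}^{N} x^n_{r_n} · h^n_{r_n − r_{n−1}}` (which equals
`x^N_t · Σ h^N_{t−r_{N−1}} · x^{N−1}_{r_{N−1}} ⋯ x^1_{r_1} · h^1_{r_1−s}` since
`r_N = t`), and `H_{t,s} = 0` for `s > t`. -/
theorem hyenaMatrix_entries {L N : ℕ} (hN : 1 ≤ N)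
    (h x : Fin N → Fin L → ℝ) (t s : Fin L) :
    (s ≤ t →
      hyenaMatrix N h x t s =
        ∑ r : Fin (N + 1) → Fin L,
          if r 0 = s ∧ r (Fin.last N) = t ∧ (∀ a b : Fin (N + 1), a ≤ b → r a ≤ r b) then
            ∏ n : Fin N,
              x n (r n.succ) *
                h n ⟨(r n.succ).1 - (r n.castSucc).1,
                      Nat.lt_of_le_of_lt (Nat.sub_le _ _) (r n.succ).2⟩
          else 0) ∧
    (t < s → hyenaMatrix N h x t s = 0) := by
  refine ⟨fun _ => hyena_aux N h x t s, fun hts => ?_⟩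
  rw [hyena_aux N h x t s]
  refine Finset.sum_eq_zero fun r _ => ?_
  rw [if_neg]
  rintro ⟨h0, hlast, hmono⟩
  have : s ≤ t := h0 ▸ hlast ▸ hmono 0 (Fin.last N) (Fin.zero_le _)
  exact absurd hts (not_lt.mpr this)
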